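/- arXiv:0911.0859 — 5 statements merged into one kernel-verified Lean document; each statement's English description precedes it below -/
import Mathlib

section
/- Let K[X] be a polynomial ring, I an ideal, O a finite set of monomials, and G ⊆ I a set of polynomials such that the K-vector space span of G together with the span of O is closed under multiplication by each variable x_i and contains 1. Then the ideal generated by G plus the span of O equals all of K[X], and consequently if K[X] = I ⊕ ⟨O⟩ as vector spaces with G ⊆ I, then the ideal generated by G equals I. -/
open MvPolynomial

theorem MvPolynomial.submodule_eq_top_of_one_mem_of_X_mul_mem {σ R : Type*} [CommSemiring R]
    {V : Submodule R (MvPolynomial σ R)} (hone : 1 ∈ V) (hmul : ∀ i, ∀ v ∈ V, X i * v ∈ V) :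
    V = ⊤ := by
  refine Submodule.eq_top_iff'.mpr fun p => ?_
  induction p using MvPolynomial.induction_on with
  | C a => simpa [smul_eq_C_mul] using V.smul_mem a hone
  | add p q hp hq => exact V.add_mem hp hq
  | mul_X p i hp => simpa only [mul_comm] using hmul i p hp

theorem stmt_2_general {K : Type*} [Field K] (n : ℕ)
    (I : Ideal (MvPolynomial (Fin n) K))
    (G : Set (MvPolynomial (Fin n) K))
    (hGI : G ⊆ (I : Set (MvPolynomial (Fin n) K)))
    (OSpan : Submodule K (MvPolynomial (Fin n) K))
    (V : Submodule K (MvPolynomial (Fin n) K))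
    (hV : V = (Ideal.span G).restrictScalars K ⊔ OSpan)
    (hmul : ∀ i : Fin n, ∀ v ∈ V, X i * v ∈ V)
    (hone : (1 : MvPolynomial (Fin n) K) ∈ V) :
    V = ⊤ ∧
      ((I.restrictScalars K ⊓ OSpan = ⊥ ∧ I.restrictScalars K ⊔ OSpan = ⊤) →
        Ideal.span G = I) := by
  have hVtop : V = ⊤ := submodule_eq_top_of_one_mem_of_X_mul_mem hone hmul
  refine ⟨hVtop, fun ⟨hinf, _⟩ => Submodule.restrictScalars_injective K _ _ ?_⟩
  have hle : (Ideal.span G).restrictScalars K ≤ I.restrictScalars K :=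
    Submodule.restrictScalars_mono K (Ideal.span_le.mpr hGI)
  have hsup : I.restrictScalars K ⊔ OSpan ≤ (Ideal.span G).restrictScalars K ⊔ OSpan := by
    rw [← hV, hVtop]
    exact le_top
  exact eq_of_le_of_inf_le_of_sup_le hle (by rw [hinf]; exact bot_le) hsup

/-- If the ideal generated by `G` together with the span of the monomial set `O`
is closed under multiplication by all variables and contains `1`, then it is all
of `K[X]`; consequently, if moreover `K[X] = I ⊕ ⟨O⟩` with `G ⊆ I`, then the
ideal generated by `G` is `I`. -/
theorem stmt_2 {K : Type*} [Field K] (n : ℕ)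
    (I : Ideal (MvPolynomial (Fin n) K))
    (O : Finset (Fin n →₀ ℕ)) (G : Set (MvPolynomial (Fin n) K))
    (hGI : G ⊆ (I : Set (MvPolynomial (Fin n) K)))
    (OSpan : Submodule K (MvPolynomial (Fin n) K))
    (hOSpan : OSpan =
      Submodule.span K ((fun m => (monomial m (1 : K))) '' (O : Set (Fin n →₀ ℕ))))
    (V : Submodule K (MvPolynomial (Fin n) K))
    (hV : V = (Ideal.span G).restrictScalars K ⊔ OSpan)
    (hmul : ∀ i : Fin n, ∀ v ∈ V, X i * v ∈ V)
    (hone : (1 : MvPolynomial (Fin n) K) ∈ V) :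
    V = ⊤ ∧
      ((I.restrictScalars K ⊓ OSpan = ⊥ ∧ I.restrictScalars K ⊔ OSpan = ⊤) →
        Ideal.span G = I) :=
  stmt_2_general n I G hGI OSpan V hV hmul hone
end

section
/- Let Ĩ ⊆ ⟨T^n_{≤d}⟩ be a subspace with Ĩ⁺ ∩ ⟨T^n_{≤d}⟩ = Ĩ and Ĩ + ⟨T^n_{≤d−1}⟩ = ⟨T^n_{≤d}⟩. Then the ideal generated by Ĩ intersected with the span of monomials of degree at most d equals Ĩ: (Ĩ) ∩ ⟨T^n_{≤d}⟩ = Ĩ. -/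
/-!
Let `W ⊆ K[X]/Ĩ` be the image of `⟨T_{≤d}⟩`, i.e. `⟨T_{≤d}⟩/Ĩ`; by `Ĩ + ⟨T_{≤d-1}⟩ = ⟨T_{≤d}⟩` it is
already the image of `⟨T_{≤d-1}⟩`. Stability `Ĩ⁺ ∩ ⟨T_{≤d}⟩ = Ĩ` makes `[r] ↦ [x_i r]`
(`deg r ≤ d - 1`) well defined endomorphisms `μ_i` of `W`, and they commute: two reductions of
`x_i x_j r` differ by an element of `Ĩ⁺ ∩ ⟨T_{≤d}⟩`. So `f ↦ f(μ)[1]` is a map `K[X] → W` whose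
kernel is an ideal. It agrees with `f ↦ [f]` on `⟨T_{≤d}⟩`, so its kernel contains `Ĩ`, hence
`(Ĩ)`, and meets `⟨T_{≤d}⟩` exactly in `Ĩ`. For `d = 0`, `Ĩ` is `0` or all of `K`.
-/

open MvPolynomial

/-- Neighborhood extension `V⁺ = V + x_1 V + ⋯ + x_n V` of a subspace. -/
noncomputable def nbhdExt {K : Type*} [Field K] {n : ℕ}
    (V : Submodule K (MvPolynomial (Fin n) K)) : Submodule K (MvPolynomial (Fin n) K) :=
  V ⊔ ⨆ i : Fin n, Submodule.map (LinearMap.mulLeft K (X i)) V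

theorem LinearMap.exists_comp_eq_of_surjective_of_ker_le {R M N P : Type*} [Ring R]
    [AddCommGroup M] [AddCommGroup N] [AddCommGroup P] [Module R M] [Module R N] [Module R P]
    {φ : M →ₗ[R] N} {ψ : M →ₗ[R] P} (hφ : Function.Surjective φ) (h : ker φ ≤ ker ψ) :
    ∃ χ : N →ₗ[R] P, χ ∘ₗ φ = ψ :=
  ⟨(ker φ).liftQ ψ h ∘ₗ (φ.quotKerEquivOfSurjective hφ).symm.toLinearMap, by
    ext x; simp [quotKerEquivOfSurjective_symm_apply]⟩

namespace MvPolynomial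

section evalCommuting

variable {R W σ : Type*} [CommSemiring R] [AddCommMonoid W] [Module R W]

-- `aeval` needs a commutative target: the subalgebra generated by the `μ i`.
open scoped IsMulCommutative in
noncomputable def evalCommuting (μ : σ → Module.End R W) (hμ : ∀ i j, Commute (μ i) (μ j)) :
    MvPolynomial σ R →ₐ[R] Module.End R W :=
  have : IsMulCommutative (Algebra.adjoin R (Set.range μ)) :=
    Algebra.isMulCommutative_adjoin R (by rintro _ ⟨i, rfl⟩ _ ⟨j, rfl⟩; exact hμ i j)
  (Algebra.adjoin R (Set.range μ)).val.comp <|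
    aeval (S₁ := Algebra.adjoin R (Set.range μ)) fun i =>
      ⟨μ i, Algebra.subset_adjoin ⟨i, rfl⟩⟩

@[simp]
theorem evalCommuting_X (μ : σ → Module.End R W) (hμ : ∀ i j, Commute (μ i) (μ j))
    (i : σ) : evalCommuting μ hμ (X i) = μ i := by
  simp [evalCommuting]

end evalCommuting

section restrictTotalDegree

variable {R σ : Type*} [CommSemiring R] {k : ℕ}

theorem one_mem_restrictTotalDegree (k : ℕ) :
    (1 : MvPolynomial σ R) ∈ restrictTotalDegree σ R k := by
  rw [mem_restrictTotalDegree, totalDegree_one]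
  exact k.zero_le

theorem restrictTotalDegree_mono : Monotone (restrictTotalDegree σ R) := fun _ _ h _ hp =>
  (mem_restrictTotalDegree _ _ _).2 (((mem_restrictTotalDegree _ _ _).1 hp).trans h)

theorem X_mul_mem_restrictTotalDegree_succ [Nontrivial R] (i : σ) {p : MvPolynomial σ R}
    (hp : p ∈ restrictTotalDegree σ R k) : X i * p ∈ restrictTotalDegree σ R (k + 1) := by
  rw [mem_restrictTotalDegree] at hp ⊢
  calc (X i * p).totalDegree ≤ (X i).totalDegree + p.totalDegree := totalDegree_mul _ _
    _ ≤ k + 1 := by rw [totalDegree_X]; omega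

theorem mem_restrictTotalDegree_of_mul_X_mem [IsDomain R] {i : σ} {p : MvPolynomial σ R}
    (hp : p * X i ∈ restrictTotalDegree σ R (k + 1)) : p ∈ restrictTotalDegree σ R k := by
  rcases eq_or_ne p 0 with rfl | hp0
  · exact zero_mem _
  rw [mem_restrictTotalDegree, totalDegree_mul_of_isDomain hp0 (X_ne_zero i), totalDegree_X]
    at hp
  rw [mem_restrictTotalDegree]
  omega

end restrictTotalDegree

theorem span_inf_restrictTotalDegree_zero_le {K σ : Type*} [Field K]
    {I : Submodule K (MvPolynomial σ K)} (hsub : I ≤ restrictTotalDegree σ K 0) :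
    (Ideal.span (I : Set (MvPolynomial σ K))).restrictScalars K ⊓ restrictTotalDegree σ K 0 ≤
      I := by
  have hC : ∀ p ∈ restrictTotalDegree σ K 0, p = C (p.coeff 0) := fun p hp =>
    totalDegree_eq_zero_iff_eq_C.1 (Nat.le_zero.1 ((mem_restrictTotalDegree _ _ _).1 hp))
  rintro f ⟨hfI, hf⟩
  by_cases hI : ∃ c ∈ I, c ≠ 0
  · obtain ⟨c, hcI, hc0⟩ := hI
    have hc : c = C (c.coeff 0) := hC c (hsub hcI)
    have ha : c.coeff 0 ≠ 0 := fun h => hc0 (by rw [hc, h, C_0])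
    have : f = (f.coeff 0 / c.coeff 0) • c :=
      calc f = C (f.coeff 0) := hC f hf
        _ = C (f.coeff 0 / c.coeff 0) * C (c.coeff 0) := by rw [← C_mul, div_mul_cancel₀ _ ha]
        _ = (f.coeff 0 / c.coeff 0) • c := by rw [smul_eq_C_mul, ← hc]
    rw [this]
    exact I.smul_mem _ hcI
  · push Not at hI
    replace hfI : f ∈ Ideal.span (I : Set (MvPolynomial σ K)) := hfI
    rw [Ideal.span_eq_bot.2 hI, Ideal.mem_bot] at hfI
    exact hfI ▸ zero_mem I

section Stabilized

variable {K : Type*} [Field K] {n e : ℕ} {I : Submodule K (MvPolynomial (Fin n) K)}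

local notation "𝒫" => MvPolynomial (Fin n) K
local notation "𝒯" k => restrictTotalDegree (Fin n) K k
local notation "𝒲" => Submodule.map (Submodule.mkQ I) (𝒯 e)
local notation "ρ" => LinearMap.submoduleMap (Submodule.mkQ I) (𝒯 e)

theorem X_mul_mem_nbhdExt (i : Fin n) {t : 𝒫} (ht : t ∈ I) :
    X i * t ∈ nbhdExt I :=
  Submodule.mem_sup_right (Submodule.mem_iSup_of_mem i ⟨t, ht, rfl⟩)

theorem X_mul_mem_of_mem_restrictTotalDegree (hstab : nbhdExt I ⊓ (𝒯 (e + 1)) ≤ I)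
    (i : Fin n) {t : 𝒫} (ht : t ∈ I) (hte : t ∈ 𝒯 e) : X i * t ∈ I :=
  hstab ⟨X_mul_mem_nbhdExt i ht, X_mul_mem_restrictTotalDegree_succ i hte⟩

theorem exists_sub_mem_of_mem_restrictTotalDegree_succ (hfull : (𝒯 (e + 1)) ≤ I ⊔ 𝒯 e)
    {f : 𝒫} (hf : f ∈ 𝒯 (e + 1)) : ∃ r ∈ 𝒯 e, f - r ∈ I := by
  obtain ⟨h, hh, r, hr, rfl⟩ := Submodule.mem_sup.1 (hfull hf)
  exact ⟨r, hr, by simpa using hh⟩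

theorem X_mul_sub_X_mul_mem (hstab : nbhdExt I ⊓ (𝒯 (e + 1)) ≤ I) {i j : Fin n}
    {r r' r'' : 𝒫} (hr' : r' ∈ 𝒯 e) (hr'' : r'' ∈ 𝒯 e)
    (hj : X j * r - r' ∈ I) (hi : X i * r - r'' ∈ I) : X i * r' - X j * r'' ∈ I := by
  refine hstab ⟨?_, sub_mem (X_mul_mem_restrictTotalDegree_succ i hr')
    (X_mul_mem_restrictTotalDegree_succ j hr'')⟩
  have : X i * r' - X j * r'' = X j * (X i * r - r'') - X i * (X j * r - r') := by ring
  rw [this]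
  exact sub_mem (X_mul_mem_nbhdExt j hi) (X_mul_mem_nbhdExt i hj)

theorem exists_mulOperator (hstab : nbhdExt I ⊓ (𝒯 (e + 1)) ≤ I)
    (hfull : (𝒯 (e + 1)) ≤ I ⊔ 𝒯 e) (i : Fin n) :
    ∃ μ : Module.End K 𝒲, ∀ r : 𝒯 e, (μ (ρ r) : 𝒫 ⧸ I) = I.mkQ (X i * (r : 𝒫)) := by
  have hmem : ∀ r : 𝒯 e, I.mkQ (X i * (r : 𝒫)) ∈ 𝒲 := fun r => by
    obtain ⟨r', hr', hdiff⟩ := exists_sub_mem_of_mem_restrictTotalDegree_succ hfull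
      (X_mul_mem_restrictTotalDegree_succ i r.2)
    exact ⟨r', hr', ((Submodule.Quotient.eq I).2 hdiff).symm⟩
  obtain ⟨μ, hμ⟩ := LinearMap.exists_comp_eq_of_surjective_of_ker_le
    (ψ := LinearMap.codRestrict _ (I.mkQ ∘ₗ LinearMap.mulLeft K (X i) ∘ₗ (𝒯 e).subtype) hmem)
    (I.mkQ.submoduleMap_surjective (𝒯 e)) fun r hr => by
      have hrI : (r : 𝒫) ∈ I := by
        rw [LinearMap.mem_ker, Subtype.ext_iff] at hr
        exact (Submodule.Quotient.mk_eq_zero I).1 hr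
      rw [LinearMap.mem_ker, Subtype.ext_iff]
      exact (Submodule.Quotient.mk_eq_zero I).2
        (X_mul_mem_of_mem_restrictTotalDegree hstab i hrI r.2)
  exact ⟨μ, fun r => congr_arg Subtype.val (LinearMap.congr_fun hμ r)⟩

theorem commute_of_mulOperator (hstab : nbhdExt I ⊓ (𝒯 (e + 1)) ≤ I)
    (hfull : (𝒯 (e + 1)) ≤ I ⊔ 𝒯 e) {μ : Fin n → Module.End K 𝒲}
    (hμ : ∀ i (r : 𝒯 e), (μ i (ρ r) : 𝒫 ⧸ I) = I.mkQ (X i * (r : 𝒫)))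
    (i j : Fin n) : Commute (μ i) (μ j) := by
  have hred : ∀ i (r : 𝒯 e) {r'} (hr' : r' ∈ 𝒯 e), X i * (r : 𝒫) - r' ∈ I →
      μ i (ρ r) = ρ ⟨r', hr'⟩ := fun i r r' hr' h =>
    Subtype.ext ((hμ i r).trans ((Submodule.Quotient.eq I).2 h))
  refine LinearMap.ext fun w => ?_
  obtain ⟨r, rfl⟩ := I.mkQ.submoduleMap_surjective (𝒯 e) w
  obtain ⟨r', hr', hj⟩ := exists_sub_mem_of_mem_restrictTotalDegree_succ hfull
    (X_mul_mem_restrictTotalDegree_succ j r.2)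
  obtain ⟨r'', hr'', hi⟩ := exists_sub_mem_of_mem_restrictTotalDegree_succ hfull
    (X_mul_mem_restrictTotalDegree_succ i r.2)
  rw [Module.End.mul_apply, Module.End.mul_apply, hred j r hr' hj, hred i r hr'' hi]
  refine Subtype.ext ?_
  rw [hμ i ⟨r', hr'⟩, hμ j ⟨r'', hr''⟩]
  exact (Submodule.Quotient.eq I).2 (X_mul_sub_X_mul_mem hstab hr' hr'' hj hi)

theorem evalCommuting_apply_eq_mkQ {μ : Fin n → Module.End K 𝒲}
    (hμ : ∀ i (r : 𝒯 e), (μ i (ρ r) : 𝒫 ⧸ I) = I.mkQ (X i * (r : 𝒫)))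
    (hcomm : ∀ i j, Commute (μ i) (μ j)) {f : 𝒫} (hf : f ∈ 𝒯 (e + 1)) :
    (evalCommuting μ hcomm f (ρ ⟨1, one_mem_restrictTotalDegree e⟩) : 𝒫 ⧸ I) =
      I.mkQ f := by
  set w₀ := ρ ⟨1, one_mem_restrictTotalDegree e⟩
  have hmonomial : ∀ m a, monomial m a ∈ (𝒯 (e + 1)) →
      (evalCommuting μ hcomm (monomial m a) w₀ : 𝒫 ⧸ I) =
        I.mkQ (monomial m a) := by
    refine induction_on_monomial (fun a _ => ?_) fun p i ih hp => ?_
    · simp [w₀, C_eq_smul_one]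
    · have hpe : p ∈ 𝒯 e := mem_restrictTotalDegree_of_mul_X_mem hp
      have hp' : evalCommuting μ hcomm p w₀ = ρ ⟨p, hpe⟩ :=
        Subtype.ext (ih (restrictTotalDegree_mono e.le_succ hpe))
      rw [mul_comm p, map_mul, evalCommuting_X, Module.End.mul_apply, hp', hμ]
  rw [restrictTotalDegree, restrictSupport_eq_span] at hf
  induction hf using Submodule.span_induction with
  | mem p hp =>
    obtain ⟨m, hm, rfl⟩ := hp
    exact hmonomial m 1
      ((mem_restrictTotalDegree _ _ _).2 ((totalDegree_monomial_le m 1).trans hm))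
  | zero => simp
  | add p q _ _ hp hq => simp [hp, hq]
  | smul a p _ hp => simp [hp]

theorem span_inf_restrictTotalDegree_succ_le (hsub : I ≤ 𝒯 (e + 1))
    (hstab : nbhdExt I ⊓ (𝒯 (e + 1)) ≤ I) (hfull : (𝒯 (e + 1)) ≤ I ⊔ 𝒯 e) :
    (Ideal.span (I : Set (𝒫))).restrictScalars K ⊓ (𝒯 (e + 1)) ≤ I := by
  choose μ hμ using exists_mulOperator hstab hfull
  have hcomm := commute_of_mulOperator hstab hfull hμ
  set w₀ := ρ ⟨1, one_mem_restrictTotalDegree e⟩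
  have hspan : Ideal.span (I : Set (𝒫)) ≤
      (Ideal.torsionOf (Module.End K 𝒲) 𝒲 w₀).comap (evalCommuting μ hcomm) := by
    refine Ideal.span_le.2 fun h hh => ?_
    rw [SetLike.mem_coe, Ideal.mem_comap, Ideal.mem_torsionOf_iff, Module.End.smul_def]
    exact Subtype.ext ((evalCommuting_apply_eq_mkQ hμ hcomm (hsub hh)).trans
      ((Submodule.Quotient.mk_eq_zero I).2 hh))
  rintro f ⟨hfI, hf⟩
  have hf0 : evalCommuting μ hcomm f w₀ = 0 := hspan hfI
  exact (Submodule.Quotient.mk_eq_zero I).1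
    ((evalCommuting_apply_eq_mkQ hμ hcomm hf).symm.trans (congrArg Subtype.val hf0))

end Stabilized

end MvPolynomial

/-- If `Ĩ ⊆ ⟨T^n_{≤d}⟩` is `T^n_{≤d}`-stabilized and
`Ĩ + ⟨T^n_{≤d−1}⟩ = ⟨T^n_{≤d}⟩`, then `(Ĩ) ∩ ⟨T^n_{≤d}⟩ = Ĩ`. -/
theorem stmt_9 {K : Type*} [Field K] (n d : ℕ)
    (Itil : Submodule K (MvPolynomial (Fin n) K))
    (hsub : Itil ≤ restrictTotalDegree (Fin n) K d)
    (hstab : nbhdExt Itil ⊓ restrictTotalDegree (Fin n) K d = Itil)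
    (hfull : Itil ⊔ restrictTotalDegree (Fin n) K (d - 1) =
      restrictTotalDegree (Fin n) K d) :
    (Ideal.span (Itil : Set (MvPolynomial (Fin n) K))).restrictScalars K ⊓
        restrictTotalDegree (Fin n) K d = Itil := by
  refine le_antisymm ?_ (le_inf (fun f hf => Ideal.subset_span hf) hsub)
  cases d with
  | zero => exact span_inf_restrictTotalDegree_zero_le hsub
  | succ e => exact span_inf_restrictTotalDegree_succ_le hsub hstab.le hfull.ge
end

section
/- Let I be a zero-dimensional ideal of K[X]. The map z ↦ O(z) := {m : z_m = 1} is a bijection between the integral (0/1) points of the order ideal polytope P(I) and the set of degree-compatible order ideals of I that support a border basis of I. -/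
/-!
Write `W i` for the degree-`i` leading forms of `I` and `O_i` for the degree-`i` part of `O`.
A 0/1 point is the indicator of `O := {m | z m = 1}`; its equality constraints say that `O` is
degree-compatible, and then its inequality constraints in degree `i` say exactly that
`⟨O_i⟩ ∩ W i = 0` (take `U = O_i`; conversely `⟨U ∩ O⟩` meets `W i` trivially).
For degree-compatible `O`, a dimension count turns `⟨O_i⟩ ∩ W i = 0` into
`⟨O_i⟩ ⊕ W i = K[X]_i`, and these graded conditions for all `i` are equivalent to
`K[X] = I ⊕ ⟨O⟩`: the top form of an element of `I ∩ ⟨O⟩` lies in some `⟨O_i⟩ ∩ W i`,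
every polynomial can be reduced modulo `I + ⟨O⟩` one degree at a time, and conversely a
descending induction from the top degree of `O` recovers the graded conditions. `O` is finite
because, `I` being zero-dimensional, `W i` is all of `K[X]_i` for large `i`.
-/

open MvPolynomial

section ZeroOne

variable {α M : Type*}

theorem indicator_setOf_eq_one [Zero M] [One M] {z : α → M} (hz : ∀ a, z a = 0 ∨ z a = 1) :
    {a | z a = 1}.indicator 1 = z := by
  funext a
  by_cases h : z a = 1
  · simp [h]
  · rw [Set.indicator_of_notMem (show a ∉ {a | z a = 1} from h), (hz a).resolve_right h]

theorem setOf_indicator_one_eq [Zero M] [One M] [NeZero (1 : M)] (O : Set α) :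
    {a | O.indicator (1 : α → M) a = 1} = O := by
  ext a
  by_cases ha : a ∈ O <;> simp [ha]

theorem bijOn_setOf_eq_one [Zero M] [One M] [NeZero (1 : M)] {P : (α → M) → Prop}
    {Q : Set α → Prop} (h : ∀ O : Set α, P (O.indicator 1) ↔ Q O) :
    Set.BijOn (fun z : α → M => {a | z a = 1}) {z | (∀ a, z a = 0 ∨ z a = 1) ∧ P z}
      {O | Q O} := by
  refine ⟨fun z ⟨hz, hP⟩ => (h _).1 ((indicator_setOf_eq_one hz).symm ▸ hP),
    fun z₁ h₁ z₂ h₂ he => ?_, fun O hO => ?_⟩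
  · rw [← indicator_setOf_eq_one h₁.1, ← indicator_setOf_eq_one h₂.1]
    exact congrArg (Set.indicator · 1) he
  · refine ⟨O.indicator 1, ⟨fun a => ?_, (h O).2 hO⟩, setOf_indicator_one_eq O⟩
    by_cases ha : a ∈ O <;> simp [ha]

theorem indicator_one_antitone_iff [Zero M] [One M] [PartialOrder M] [ZeroLEOneClass M]
    [NeZero (1 : M)] {r : α → α → Prop} {O : Set α} :
    (∀ a b, r a b → O.indicator (1 : α → M) b ≤ O.indicator 1 a) ↔
      ∀ b ∈ O, ∀ a, r a b → a ∈ O := by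
  constructor
  · intro h b hb a hab
    by_contra ha
    exact (zero_lt_one (α := M)).not_ge (by simpa [hb, ha] using h a b hab)
  · intro h a b hab
    by_cases hb : b ∈ O
    · simp [hb, h b hb a hab]
    · by_cases ha : a ∈ O <;> simp [ha, hb]

theorem finsum_mem_indicator_one [AddCommMonoidWithOne M] (O : Set α) {p : α → Prop}
    (hp : {a | p a}.Finite) :
    ∑ᶠ a ∈ {a | p a}, O.indicator (1 : α → M) a = ({a ∈ O | p a}.ncard : M) := by
  classical
  rw [finsum_mem_eq_finite_toFinset_sum _ hp, Finset.sum_indicator_eq_sum_filter]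
  simp only [Pi.one_apply, Finset.sum_const, nsmul_one]
  rw [← Set.ncard_coe_finset]
  congr 2
  ext a
  simp [and_comm]

end ZeroOne

namespace Submodule

open Module

theorem disjoint_iff_finrank_sup_eq_add {K V : Type*} [DivisionRing K] [AddCommGroup V]
    [Module K V] {S T : Submodule K V} [FiniteDimensional K S] [FiniteDimensional K T] :
    Disjoint S T ↔ finrank K ↥(S ⊔ T) = finrank K S + finrank K T := by
  have := finrank_sup_add_finrank_inf_eq S T
  rw [disjoint_iff, ← Submodule.finrank_eq_zero]
  omega

end Submodule

namespace MvPolynomial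

open Submodule Module

section CommRing

variable {σ R : Type*} [CommRing R]

theorem restrictSupport_le_homogeneousSubmodule {s : Set (σ →₀ ℕ)} {i : ℕ}
    (hs : ∀ m ∈ s, m.degree = i) : restrictSupport R s ≤ homogeneousSubmodule σ R i := by
  rw [homogeneousSubmodule_eq_finsupp_supported]
  exact restrictSupport_mono (R := R) hs

theorem finrank_restrictSupport [Nontrivial R] (s : Set (σ →₀ ℕ)) :
    finrank R (restrictSupport R s) = s.ncard := by
  rw [finrank_eq_nat_card_basis (basisRestrictSupport R s), Nat.card_coe_set_eq]

theorem finite_restrictSupport {s : Set (σ →₀ ℕ)} (hs : s.Finite) :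
    Module.Finite R (restrictSupport R s) :=
  have := hs.to_subtype
  Module.Finite.of_basis (basisRestrictSupport R s)

instance [Finite σ] (i : ℕ) : Module.Finite R (homogeneousSubmodule σ R i) :=
  Module.Finite.iff_fg.2 (homogeneousSubmodule_fg σ R i)

theorem homogeneousComponent_mem_restrictSupport {s : Set (σ →₀ ℕ)} {p : MvPolynomial σ R}
    (hp : p ∈ restrictSupport R s) (i : ℕ) :
    homogeneousComponent i p ∈ restrictSupport R {m ∈ s | m.degree = i} := by
  rw [mem_restrictSupport_iff] at hp ⊢
  intro m hm
  rw [Finset.mem_coe, mem_support_iff, coeff_homogeneousComponent] at hm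
  split_ifs at hm with h
  · exact ⟨hp (mem_support_iff.2 hm), h⟩
  · exact absurd rfl hm

theorem homogeneousComponent_totalDegree_ne_zero {p : MvPolynomial σ R} (hp : p ≠ 0) :
    homogeneousComponent p.totalDegree p ≠ 0 := by
  obtain ⟨m, hm, hdeg⟩ :=
    Finset.exists_mem_eq_sup p.support (support_nonempty.2 hp) Finsupp.degree
  refine ne_of_apply_ne (coeff m) ?_
  rw [coeff_homogeneousComponent, if_pos (show m.degree = p.totalDegree from hdeg.symm),
    coeff_zero]
  exact mem_support_iff.1 hm

theorem eq_zero_or_totalDegree_lt {p : MvPolynomial σ R} {d : ℕ} (hp : p.totalDegree ≤ d)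
    (h : homogeneousComponent d p = 0) : p = 0 ∨ p.totalDegree < d := by
  by_contra! h'
  exact homogeneousComponent_totalDegree_ne_zero h'.1 (le_antisymm hp h'.2 ▸ h)

/-- The degree-`i` leading forms of the elements of `I` of degree at most `i`: the space
`I^{≤i}/I^{≤i-1}`, embedded into the homogeneous polynomials of degree `i`. -/
noncomputable def leadingForms (I : Ideal (MvPolynomial σ R)) (i : ℕ) :
    Submodule R (MvPolynomial σ R) :=
  (I.restrictScalars R ⊓ restrictTotalDegree σ R i).map (homogeneousComponent i)

variable {I : Ideal (MvPolynomial σ R)} {O : Set (σ →₀ ℕ)}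

theorem leadingForms_le_homogeneousSubmodule (I : Ideal (MvPolynomial σ R)) (i : ℕ) :
    leadingForms I i ≤ homogeneousSubmodule σ R i := by
  rintro _ ⟨f, -, rfl⟩
  exact homogeneousComponent_mem i f

theorem homogeneousComponent_mem_leadingForms {f : MvPolynomial σ R} (hf : f ∈ I) {i : ℕ}
    (hi : f.totalDegree ≤ i) : homogeneousComponent i f ∈ leadingForms I i :=
  mem_map_of_mem ⟨hf, (mem_restrictTotalDegree σ i f).2 hi⟩

theorem restrictScalars_inf_restrictSupport_eq_bot
    (h : ∀ i, Disjoint (restrictSupport R {m ∈ O | m.degree = i}) (leadingForms I i)) :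
    I.restrictScalars R ⊓ restrictSupport R O = ⊥ := by
  refine eq_bot_iff.2 fun f ⟨hfI, hfO⟩ => (mem_bot R).2 ?_
  by_contra hf
  exact homogeneousComponent_totalDegree_ne_zero hf <| disjoint_def.1 (h _) _
    (homogeneousComponent_mem_restrictSupport hfO _)
    (homogeneousComponent_mem_leadingForms hfI le_rfl)

theorem restrictScalars_sup_restrictSupport_eq_top
    (h : ∀ i, restrictSupport R {m ∈ O | m.degree = i} ⊔ leadingForms I i =
      homogeneousSubmodule σ R i) :
    I.restrictScalars R ⊔ restrictSupport R O = ⊤ := by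
  rw [eq_top_iff]
  rintro f -
  induction hd : f.totalDegree using Nat.strong_induction_on generalizing f with
  | _ d ih =>
  obtain ⟨s, hs, _, ⟨g, ⟨hgI, hgd⟩, rfl⟩, hsg⟩ :=
    mem_sup.1 (h d ▸ homogeneousComponent_mem d f)
  have hs_hom : s ∈ homogeneousSubmodule σ R d := h d ▸ mem_sup_left hs
  have hr : f - s - g = 0 ∨ (f - s - g).totalDegree < d := by
    refine eq_zero_or_totalDegree_lt ((mem_restrictTotalDegree σ d _).1 ?_) ?_
    · refine sub_mem (sub_mem ?_ ?_) hgd <;> rw [mem_restrictTotalDegree]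
      exacts [hd.le, IsHomogeneous.totalDegree_le hs_hom]
    · rw [map_sub, map_sub, homogeneousComponent_of_mem hs_hom, if_pos rfl, ← hsg]
      abel
  have hrT : f - s - g ∈ I.restrictScalars R ⊔ restrictSupport R O :=
    hr.elim (fun h0 => h0 ▸ zero_mem _) fun hlt => ih _ hlt rfl
  rw [show f = (f - s - g) + g + s by abel]
  exact add_mem (add_mem hrT (mem_sup_left hgI))
    (mem_sup_right (restrictSupport_mono (R := R) (fun m hm => hm.1) hs))

theorem restrictSupport_sup_leadingForms_eq
    (htop : I.restrictScalars R ⊔ restrictSupport R O = ⊤) {i : ℕ}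
    (hgt : ∀ j, i < j →
      Disjoint (restrictSupport R {m ∈ O | m.degree = j}) (leadingForms I j)) :
    restrictSupport R {m ∈ O | m.degree = i} ⊔ leadingForms I i =
      homogeneousSubmodule σ R i := by
  refine le_antisymm (sup_le (restrictSupport_le_homogeneousSubmodule fun m hm => hm.2)
    (leadingForms_le_homogeneousSubmodule I i)) fun v hv => ?_
  obtain ⟨a, ha, b, hb, rfl⟩ :=
    mem_sup.1 (htop ▸ mem_top : v ∈ I.restrictScalars R ⊔ restrictSupport R O)
  have hdeg : a.totalDegree ≤ i := by
    by_contra! hlt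
    have ha0 : a ≠ 0 := by rintro rfl; simp at hlt
    refine homogeneousComponent_totalDegree_ne_zero ha0 (disjoint_def.1 (hgt _ hlt) _ ?_
      (homogeneousComponent_mem_leadingForms ha le_rfl))
    -- the top forms of `a` and `b` cancel, as `a + b` has degree `i`
    have hab := homogeneousComponent_of_mem (m := a.totalDegree) hv
    rw [if_neg hlt.ne', map_add] at hab
    rw [eq_neg_of_add_eq_zero_left hab]
    exact neg_mem (homogeneousComponent_mem_restrictSupport hb _)
  rw [← homogeneousComponent_eq_self hv, map_add]
  exact add_mem (mem_sup_right (homogeneousComponent_mem_leadingForms ha hdeg))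
    (mem_sup_left (homogeneousComponent_mem_restrictSupport hb i))

end CommRing

section Field

variable {σ K : Type*} [Field K] {I : Ideal (MvPolynomial σ K)} {O : Set (σ →₀ ℕ)}

instance [Finite σ] (i : ℕ) : FiniteDimensional K (leadingForms I i) :=
  Submodule.finiteDimensional_of_le (leadingForms_le_homogeneousSubmodule I i)

theorem exists_leadingForms_eq_homogeneousSubmodule (I : Ideal (MvPolynomial σ K))
    [FiniteDimensional K (MvPolynomial σ K ⧸ I)] :
    ∃ D, ∀ i, D < i → leadingForms I i = homogeneousSubmodule σ K i := by
  let q := (Ideal.Quotient.mkₐ K I).toLinearMap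
  obtain ⟨D, hD⟩ := monotone_stabilizes_iff_noetherian.2 inferInstance
    ⟨fun j => (restrictTotalDegree σ K j).map q,
      fun a b hab => map_mono (restrictSupport_mono (R := K) fun m hm => le_trans hm hab)⟩
  refine ⟨D, fun i hi => le_antisymm (leadingForms_le_homogeneousSubmodule I i) fun p hp => ?_⟩
  have hpi : p ∈ restrictTotalDegree σ K i :=
    (mem_restrictTotalDegree σ i p).2 (IsHomogeneous.totalDegree_le hp)
  have hDi : (restrictTotalDegree σ K i).map q = (restrictTotalDegree σ K D).map q :=
    (hD i hi.le).symm
  obtain ⟨r, hr, hqr⟩ := hDi ▸ mem_map_of_mem (f := q) hpi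
  have hrD := (mem_restrictTotalDegree σ D r).1 hr
  refine ⟨p - r, ⟨Ideal.Quotient.eq.1 hqr.symm, sub_mem hpi ?_⟩, ?_⟩
  · exact (mem_restrictTotalDegree σ i r).2 (hrD.trans hi.le)
  · rw [map_sub, homogeneousComponent_eq_self hp,
      homogeneousComponent_eq_zero _ _ (hrD.trans_lt hi), sub_zero]

theorem finite_sep_degree_eq [Finite σ] (O : Set (σ →₀ ℕ)) (i : ℕ) :
    {m ∈ O | m.degree = i}.Finite :=
  (Finsupp.finite_of_degree_eq i).subset fun _ hm => hm.2

theorem sum_indicator_one_le_of_disjoint {W : Submodule K (MvPolynomial σ K)}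
    [FiniteDimensional K W] {i : ℕ} (h : Disjoint (restrictSupport K {m ∈ O | m.degree = i}) W)
    (U : Finset (σ →₀ ℕ)) (hU : ∀ m ∈ U, m.degree = i) :
    ∑ m ∈ U, O.indicator (1 : (σ →₀ ℕ) → ℤ) m ≤
      (finrank K ↥(restrictSupport K U ⊔ W) : ℤ) - finrank K W := by
  classical
  rw [Finset.sum_indicator_eq_sum_filter]
  simp only [Pi.one_apply, Finset.sum_const, nsmul_one]
  set F := {m ∈ U | m ∈ O}
  have := finite_restrictSupport (R := K) F.finite_toSet
  have := finite_restrictSupport (R := K) U.finite_toSet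
  have hF : Disjoint (restrictSupport K F) W := h.mono_left <| restrictSupport_mono (R := K)
    fun m hm => show m ∈ O ∧ m.degree = i from
      ⟨(Finset.mem_filter.1 hm).2, hU _ (Finset.mem_filter.1 hm).1⟩
  have hFU :
      finrank K ↥(restrictSupport K F ⊔ W) ≤ finrank K ↥(restrictSupport K U ⊔ W) :=
    finrank_mono (sup_le_sup_right (restrictSupport_mono (R := K) (Finset.filter_subset _ U)) _)
  rw [disjoint_iff_finrank_sup_eq_add, finrank_restrictSupport, Set.ncard_coe_finset] at hF
  omega

def IsDegreeCompatible (I : Ideal (MvPolynomial σ K)) (O : Set (σ →₀ ℕ)) : Prop :=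
  ∀ i, {m ∈ O | m.degree = i}.ncard + finrank K (leadingForms I i) =
    finrank K (homogeneousSubmodule σ K i)

namespace IsDegreeCompatible

variable [Finite σ]

theorem finite [FiniteDimensional K (MvPolynomial σ K ⧸ I)] (hO : IsDegreeCompatible I O) :
    O.Finite := by
  obtain ⟨D, hD⟩ := exists_leadingForms_eq_homogeneousSubmodule I
  refine (Finsupp.finite_of_degree_le D).subset fun m hm =>
    show m.degree ≤ D from le_of_not_gt fun hlt => ?_
  have hempty := hO m.degree
  rw [hD _ hlt, Nat.add_eq_right, Set.ncard_eq_zero (finite_sep_degree_eq O _)] at hempty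
  exact hempty.subset ⟨hm, rfl⟩

theorem disjoint_iff_sup_eq (hO : IsDegreeCompatible I O) (i : ℕ) :
    Disjoint (restrictSupport K {m ∈ O | m.degree = i}) (leadingForms I i) ↔
      restrictSupport K {m ∈ O | m.degree = i} ⊔ leadingForms I i =
        homogeneousSubmodule σ K i := by
  have := finite_restrictSupport (R := K) (finite_sep_degree_eq O i)
  have hle : restrictSupport K {m ∈ O | m.degree = i} ⊔ leadingForms I i ≤
      homogeneousSubmodule σ K i :=
    sup_le (restrictSupport_le_homogeneousSubmodule fun m hm => hm.2)
      (leadingForms_le_homogeneousSubmodule I i)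
  rw [disjoint_iff_finrank_sup_eq_add, finrank_restrictSupport, hO i]
  exact ⟨fun h => eq_of_le_of_finrank_le hle h.ge, fun h => by rw [h]⟩

theorem disjoint_of_sup_eq_top (hO : IsDegreeCompatible I O) (hfin : O.Finite)
    (htop : I.restrictScalars K ⊔ restrictSupport K O = ⊤) (i : ℕ) :
    Disjoint (restrictSupport K {m ∈ O | m.degree = i}) (leadingForms I i) := by
  obtain ⟨D, hD⟩ := (hfin.image Finsupp.degree).bddAbove
  induction hk : D + 1 - i using Nat.strong_induction_on generalizing i with
  | _ k ih =>
  rcases lt_or_ge D i with hi | hi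
  · have hempty : {m ∈ O | m.degree = i} = ∅ := Set.eq_empty_of_forall_notMem fun m hm =>
      (hD ⟨m, hm.1, rfl⟩).not_gt (hm.2 ▸ hi)
    refine disjoint_def.2 fun p hp _ => ?_
    rwa [hempty, mem_restrictSupport_iff, Set.subset_empty_iff, Finset.coe_eq_empty,
      support_eq_empty] at hp
  · exact (hO.disjoint_iff_sup_eq i).2 <|
      restrictSupport_sup_leadingForms_eq htop fun j hj => ih _ (by omega) j rfl

theorem forall_disjoint_iff [FiniteDimensional K (MvPolynomial σ K ⧸ I)]
    (hO : IsDegreeCompatible I O) :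
    (∀ i, Disjoint (restrictSupport K {m ∈ O | m.degree = i}) (leadingForms I i)) ↔
      O.Finite ∧ I.restrictScalars K ⊓ restrictSupport K O = ⊥ ∧
        I.restrictScalars K ⊔ restrictSupport K O = ⊤ := by
  refine ⟨fun h => ⟨hO.finite, restrictScalars_inf_restrictSupport_eq_bot h,
    restrictScalars_sup_restrictSupport_eq_top fun i => (hO.disjoint_iff_sup_eq i).1 (h i)⟩,
    fun ⟨hfin, _, htop⟩ => hO.disjoint_of_sup_eq_top hfin htop⟩

-- Stated with `span`, as in the polytope: `simp` cannot rewrite a submodule inside `finrank`.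
theorem forall_sum_indicator_one_le_iff (hO : IsDegreeCompatible I O) (i : ℕ) :
    (∀ U : Finset (σ →₀ ℕ), (∀ m ∈ U, m.degree = i) →
      U.card + finrank K (leadingForms I i) = finrank K (homogeneousSubmodule σ K i) →
      ∑ m ∈ U, O.indicator (1 : (σ →₀ ℕ) → ℤ) m ≤
        (finrank K ↥(span K ((monomial · 1) '' U) ⊔ leadingForms I i) : ℤ) -
          finrank K (leadingForms I i)) ↔
      Disjoint (restrictSupport K {m ∈ O | m.degree = i}) (leadingForms I i) := by
  refine ⟨fun h => ?_, fun h U hU _ => by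
    rw [← restrictSupport_eq_span]
    exact sum_indicator_one_le_of_disjoint h U hU⟩
  have hfin := finite_sep_degree_eq O i
  have := finite_restrictSupport (R := K) hfin
  have hsum := h hfin.toFinset (fun m hm => (hfin.mem_toFinset.1 hm).2)
    (by rw [← Set.ncard_eq_toFinset_card _ hfin]; exact hO i)
  rw [Finset.sum_congr rfl fun m hm => Set.indicator_of_mem (hfin.mem_toFinset.1 hm).1 _,
    Set.Finite.coe_toFinset, ← restrictSupport_eq_span] at hsum
  simp only [Pi.one_apply, Finset.sum_const, nsmul_one,
    ← Set.ncard_eq_toFinset_card _ hfin] at hsum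
  rw [disjoint_iff_finrank_sup_eq_add, finrank_restrictSupport]
  have := finrank_add_le_finrank_add_finrank (restrictSupport K {m ∈ O | m.degree = i})
    (leadingForms I i)
  rw [finrank_restrictSupport] at this
  omega

end IsDegreeCompatible

end Field

end MvPolynomial

/-- The map `z ↦ O(z) = {m | z_m = 1}` is a bijection between the integral
(0/1) points of the order ideal polytope `P(I)` of a zero-dimensional ideal `I`
and the degree-compatible order ideals of `I` that support a border basis. -/
theorem stmt_11 {K : Type*} [Field K] (n : ℕ)
    (I : Ideal (MvPolynomial (Fin n) K))
    [FiniteDimensional K (MvPolynomial (Fin n) K ⧸ I)]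
    (W : ℕ → Submodule K (MvPolynomial (Fin n) K))
    (hW : ∀ i : ℕ, W i = Submodule.map (homogeneousComponent i)
      (I.restrictScalars K ⊓ restrictTotalDegree (Fin n) K i)) :
    Set.BijOn (fun z : (Fin n →₀ ℕ) → ℤ => {m : Fin n →₀ ℕ | z m = 1})
      -- the integral points of the order ideal polytope P(I)
      {z : (Fin n →₀ ℕ) → ℤ |
        (∀ m : Fin n →₀ ℕ, z m = 0 ∨ z m = 1) ∧
        (∀ m₁ m₂ : Fin n →₀ ℕ, (∀ i, m₁ i ≤ m₂ i) → z m₂ ≤ z m₁) ∧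
        (∀ i : ℕ, (∑ᶠ m ∈ {m : Fin n →₀ ℕ | m.sum (fun _ e => e) = i}, z m) =
          (Module.finrank K (homogeneousSubmodule (Fin n) K i) : ℤ) -
            (Module.finrank K (W i) : ℤ)) ∧
        (∀ i : ℕ, ∀ U : Finset (Fin n →₀ ℕ),
          (∀ m ∈ U, m.sum (fun _ e => e) = i) →
          U.card + Module.finrank K (W i) =
            Module.finrank K (homogeneousSubmodule (Fin n) K i) →
          (∑ m ∈ U, z m) ≤
            (Module.finrank K
              ↥(Submodule.span K ((fun m => (monomial m (1 : K))) '' (U : Set (Fin n →₀ ℕ)))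
                ⊔ W i) : ℤ) - (Module.finrank K (W i) : ℤ))}
      -- the degree-compatible order ideals of I supporting a border basis
      {O : Set (Fin n →₀ ℕ) |
        O.Finite ∧
        (∀ t ∈ O, ∀ t' : Fin n →₀ ℕ, (∀ i, t' i ≤ t i) → t' ∈ O) ∧
        (∀ i : ℕ, {m ∈ O | m.sum (fun _ e => e) = i}.ncard + Module.finrank K (W i) =
          Module.finrank K (homogeneousSubmodule (Fin n) K i)) ∧
        I.restrictScalars K ⊓
            Submodule.span K ((fun m => (monomial m (1 : K))) '' O) = ⊥ ∧
        I.restrictScalars K ⊔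
            Submodule.span K ((fun m => (monomial m (1 : K))) '' O) = ⊤} := by
  obtain rfl : W = leadingForms I := funext hW
  have hdeg (m : Fin n →₀ ℕ) : (m.sum fun _ e => e) = m.degree := rfl
  have hcast (a b c : ℕ) : ((a : ℤ) = b - c ↔ a + c = b) := by omega
  refine bijOn_setOf_eq_one fun O => ?_
  simp only [hdeg, ← restrictSupport_eq_span K O, indicator_one_antitone_iff,
    finsum_mem_indicator_one O (Finsupp.finite_of_degree_eq _), hcast]
  constructor
  · rintro ⟨hdown, hO : IsDegreeCompatible I O, hU⟩
    obtain ⟨hfin, hbot, htop⟩ :=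
      hO.forall_disjoint_iff.1 fun i => (hO.forall_sum_indicator_one_le_iff i).1 (hU i)
    exact ⟨hfin, hdown, hO, hbot, htop⟩
  · rintro ⟨hfin, hdown, hO : IsDegreeCompatible I O, hbot, htop⟩
    exact ⟨hdown, hO, fun i => (hO.forall_sum_indicator_one_le_iff i).2
      (hO.forall_disjoint_iff.2 ⟨hfin, hbot, htop⟩ i)⟩
end

section
/- Let I be a zero-dimensional ideal, i a degree, and O a set of degree-i monomials with |O| = dim⟨T^n_{=i}⟩ − dim(I^{≤i}/I^{≤i−1}). Then the image of O in ⟨T^n_{=i}⟩ / (I^{≤i}/I^{≤i−1}) is linearly independent if and only if for every subset U ⊆ T^n_{=i} of that same cardinality one has |U ∩ O| ≤ dim⟨U ∪ (I^{≤i}/I^{≤i−1})⟩ − dim(I^{≤i}/I^{≤i−1}). -/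
/-!
The image of `span U` in `V ⧸ W` has dimension `dim (span U ⊔ W) - dim W`, so the inequality
for `U = O` says exactly that the images of the monomials of `O` are independent modulo `W`.
Conversely, independence of `O` passes to the subfamily `U ∩ O`, whose span lies in `span U`.
-/

open MvPolynomial Module Submodule

section QuotientIndependence

variable {K V ι : Type*} [Field K] [AddCommGroup V] [Module K V]

theorem Submodule.finrank_map_mkQ_add_finrank (W P : Submodule K V) [FiniteDimensional K P]
    [FiniteDimensional K W] :
    finrank K (P.map W.mkQ) + finrank K W = finrank K ↥(P ⊔ W) := by
  let f := W.mkQ ∘ₗ (P ⊔ W).subtype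
  have hrange : LinearMap.range f = P.map W.mkQ := by
    rw [LinearMap.range_comp, range_subtype, map_sup, mkQ_map_self, sup_bot_eq]
  have hker : LinearMap.ker f = W.comap (P ⊔ W).subtype := by
    rw [LinearMap.ker_comp, ker_mkQ]
  have := LinearMap.finrank_range_add_finrank_ker f
  rwa [hrange, hker, (comapSubtypeEquivOfLe (le_sup_right : W ≤ P ⊔ W)).finrank_eq] at this

theorem linearIndepOn_mkQ_iff_card_add_finrank_le (W : Submodule K V) [FiniteDimensional K W]
    (v : ι → V) (s : Finset ι) :
    LinearIndepOn K (W.mkQ ∘ v) (s : Set ι) ↔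
      s.card + finrank K W ≤ finrank K ↥(span K (v '' s) ⊔ W) := by
  have : FiniteDimensional K (span K (v '' s)) :=
    FiniteDimensional.span_of_finite K (s.finite_toSet.image v)
  rw [← finrank_map_mkQ_add_finrank, map_span, ← Set.image_comp, add_le_add_iff_right,
    LinearIndepOn, linearIndependent_iff_card_le_finrank_span, Set.image_eq_range,
    Set.finrank]
  simp only [Finset.coe_sort_coe, Fintype.card_coe]

end QuotientIndependence

theorem stmt_12_general {K : Type*} [Field K] (n i : ℕ)
    (I : Ideal (MvPolynomial (Fin n) K))
    (W : Submodule K (MvPolynomial (Fin n) K))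
    (hW : W = Submodule.map (homogeneousComponent i)
      (I.restrictScalars K ⊓ restrictTotalDegree (Fin n) K i))
    (O : Finset (Fin n →₀ ℕ))
    (hOdeg : ∀ m ∈ O, m.sum (fun _ e => e) = i) :
    (LinearIndependent K
        (fun m : {m // m ∈ O} => W.mkQ (monomial m.1 (1 : K)))) ↔
      (∀ U : Finset (Fin n →₀ ℕ), (∀ m ∈ U, m.sum (fun _ e => e) = i) →
        U.card = O.card →
        (U ∩ O).card + Module.finrank K W ≤
          Module.finrank K
            ↥(Submodule.span K ((fun m => (monomial m (1 : K))) '' (U : Set (Fin n →₀ ℕ)))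
              ⊔ W)) := by
  have : FiniteDimensional K W := hW ▸ Module.Finite.map _ _
  set mon : (Fin n →₀ ℕ) → MvPolynomial (Fin n) K := fun m => monomial m 1
  change LinearIndepOn K (W.mkQ ∘ mon) (O : Set _) ↔ _
  constructor
  · intro hO U _ _
    have : FiniteDimensional K (span K (mon '' U)) :=
      FiniteDimensional.span_of_finite K (U.finite_toSet.image mon)
    calc (U ∩ O).card + finrank K W ≤ finrank K ↥(span K (mon '' ↑(U ∩ O)) ⊔ W) :=
          (linearIndepOn_mkQ_iff_card_add_finrank_le W mon _).1 (hO.mono (by simp))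
      _ ≤ _ := finrank_mono (sup_le_sup_right (span_mono (Set.image_mono (by simp))) W)
  · intro h
    exact (linearIndepOn_mkQ_iff_card_add_finrank_le W mon O).2
      (by simpa using h O hOdeg rfl)

/-- The matroid rank inequalities of the order ideal polytope characterize
linear independence modulo the leading forms of the ideal: for a set `O` of
degree-`i` monomials of the right cardinality, the image of `O` in
`⟨T^n_{=i}⟩/(I^{≤i}/I^{≤i−1})` is linearly independent iff for every subset
`U` of degree-`i` monomials of the same cardinality,
`|U ∩ O| ≤ dim⟨U ∪ (I^{≤i}/I^{≤i−1})⟩ − dim(I^{≤i}/I^{≤i−1})`. -/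
theorem stmt_12 {K : Type*} [Field K] (n i : ℕ)
    (I : Ideal (MvPolynomial (Fin n) K))
    [FiniteDimensional K (MvPolynomial (Fin n) K ⧸ I)]
    (W : Submodule K (MvPolynomial (Fin n) K))
    (hW : W = Submodule.map (homogeneousComponent i)
      (I.restrictScalars K ⊓ restrictTotalDegree (Fin n) K i))
    (O : Finset (Fin n →₀ ℕ))
    (hOdeg : ∀ m ∈ O, m.sum (fun _ e => e) = i)
    (hOcard : O.card + Module.finrank K W =
      Module.finrank K (homogeneousSubmodule (Fin n) K i)) :
    (LinearIndependent K
        (fun m : {m // m ∈ O} => W.mkQ (monomial m.1 (1 : K)))) ↔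
      (∀ U : Finset (Fin n →₀ ℕ), (∀ m ∈ U, m.sum (fun _ e => e) = i) →
        U.card = O.card →
        (U ∩ O).card + Module.finrank K W ≤
          Module.finrank K
            ↥(Submodule.span K ((fun m => (monomial m (1 : K))) '' (U : Set (Fin n →₀ ℕ)))
              ⊔ W)) :=
  stmt_12_general n i I W hW O hOdeg
end

section
/- Let k, n be positive integers and let a_{ij} (i ∈ [n], j ∈ [k]) be real numbers algebraically independent over ℚ. Let I be the vanishing ideal of the k points p_j = (a_{1j},…,a_{nj}) ∈ ℝ^n. Then any k distinct monomials in x_1,…,x_n are linearly independent modulo I; equivalently, every set of k distinct monomials spans a complement of I in ℝ[x_1,…,x_n], so every order ideal of size k is a complementary order ideal of I. -/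
open MvPolynomial

/-!
Evaluating `k` monomials at `k` points gives a `k × k` matrix `(x^{m_s}(p_j))`; if it is
invertible, its rows form a basis of `ℝ^k`, so the monomials span a complement of the kernel
`I` of evaluation at the points. Its determinant is the value at the point `(a_{ij})` of the
same determinant over `ℚ[X_{ij}]`, and that polynomial is nonzero: the terms of the Leibniz
expansion are distinct monomials because the `m_s` are distinct. Algebraic independence of
the `a_{ij}` says exactly that a nonzero polynomial does not vanish there.
-/

theorem Finsupp.sum_mapDomain_prodMk_apply {σ ι : Type*} [Fintype ι] (f : ι → σ →₀ ℕ)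
    (i : σ) (j : ι) :
    (∑ j', (f j').mapDomain (·, j')) (i, j) = f j i := by
  rw [Finsupp.finsetSum_apply, Finset.sum_eq_single j]
  · exact Finsupp.mapDomain_apply (Prod.mk_left_injective j) _ _
  · intro j' _ hj'
    refine Finsupp.mapDomain_of_notMem_range _ _ ?_
    rintro ⟨i', hi'⟩
    exact hj' (congrArg Prod.snd hi')
  · simp

theorem LinearMap.isCompl_ker_span_range_of_comp {R M N ι : Type*} [Ring R] [AddCommGroup M]
    [Module R M] [AddCommGroup N] [Module R N] {f : M →ₗ[R] N} {v : ι → M}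
    (hli : LinearIndependent R (f ∘ v)) (hspan : Submodule.span R (Set.range (f ∘ v)) = ⊤) :
    IsCompl (LinearMap.ker f) (Submodule.span R (Set.range v)) where
  disjoint := (Submodule.range_ker_disjoint hli).symm
  codisjoint := by
    rw [codisjoint_iff, sup_comm, ← Submodule.comap_map_eq, Submodule.map_span,
      ← Set.range_comp, hspan, Submodule.comap_top]

namespace MvPolynomial

variable {R σ ι : Type*} [CommRing R]

noncomputable def genericMonomialMatrix (R : Type*) [CommRing R] (m : ι → σ →₀ ℕ) :
    Matrix ι ι (MvPolynomial (σ × ι) R) :=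
  Matrix.of fun s j => rename (·, j) (monomial (m s) 1)

theorem det_genericMonomialMatrix_ne_zero [Fintype ι] [DecidableEq ι] [Nontrivial R]
    {m : ι → σ →₀ ℕ} (hm : Function.Injective m) : (genericMonomialMatrix R m).det ≠ 0 := by
  classical
  set e : Equiv.Perm ι → σ × ι →₀ ℕ := fun π => ∑ j, (m (π j)).mapDomain (·, j)
  have he : Function.Injective e := fun π τ h => Equiv.ext fun j => hm <| Finsupp.ext fun i => by
    simpa [e, Finsupp.sum_mapDomain_prodMk_apply] using DFunLike.congr_fun h (i, j)
  have hdet : (genericMonomialMatrix R m).det = ∑ π, Equiv.Perm.sign π • monomial (e π) 1 := by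
    simp [Matrix.det_apply, genericMonomialMatrix, e, rename_monomial, monomial_sum_one]
  intro h
  have := congrArg (coeff (e 1)) hdet
  rw [h, coeff_sum, Finset.sum_eq_single 1] at this
  · simp [coeff_monomial] at this
  · intro π _ hπ
    rw [Units.smul_def, coeff_smul, coeff_monomial, if_neg (he.ne hπ), smul_zero]
  · simp

theorem genericMonomialMatrix_map_aeval {A : Type*} [CommRing A] [Algebra R A] (x : σ × ι → A)
    (m : ι → σ →₀ ℕ) :
    (genericMonomialMatrix R m).map (aeval x) =
      Matrix.of fun s j => (m s).prod fun i e => x (i, j) ^ e := by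
  ext s j
  simp [genericMonomialMatrix, aeval_rename, aeval_monomial, Function.comp_def]

theorem det_monomial_eval_ne_zero [Fintype ι] [DecidableEq ι] [Nontrivial R] {A : Type*}
    [CommRing A] [Algebra R A] {x : σ × ι → A} (hx : AlgebraicIndependent R x) {m : ι → σ →₀ ℕ}
    (hm : Function.Injective m) :
    (Matrix.of fun s j => (m s).prod fun i e => x (i, j) ^ e).det ≠ 0 := by
  rw [← genericMonomialMatrix_map_aeval (R := R), ← AlgHom.mapMatrix_apply, ← AlgHom.map_det]
  exact (map_ne_zero_iff _ hx).mpr (det_genericMonomialMatrix_ne_zero hm)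

end MvPolynomial

theorem stmt_14_general (n k : ℕ)
    (a : Fin n → Fin k → ℝ)
    (halg : AlgebraicIndependent ℚ (fun p : Fin n × Fin k => a p.1 p.2))
    (I : Ideal (MvPolynomial (Fin n) ℝ))
    (hI : I = ⨅ j : Fin k,
      RingHom.ker ((aeval (fun i : Fin n => a i j)).toRingHom :
        MvPolynomial (Fin n) ℝ →+* ℝ))
    (m : Fin k → (Fin n →₀ ℕ)) (hm : Function.Injective m) :
    (LinearIndependent ℝ
        (fun s : Fin k => Ideal.Quotient.mk I (monomial (m s) (1 : ℝ)))) ∧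
      I.restrictScalars ℝ ⊓
          Submodule.span ℝ (Set.range (fun s : Fin k => monomial (m s) (1 : ℝ))) = ⊥ ∧
      I.restrictScalars ℝ ⊔
          Submodule.span ℝ (Set.range (fun s : Fin k => monomial (m s) (1 : ℝ))) = ⊤ := by
  set ev : MvPolynomial (Fin n) ℝ →ₐ[ℝ] (Fin k → ℝ) := AlgHom.pi fun j => aeval fun i => a i j
  have hker : LinearMap.ker ev.toLinearMap = I.restrictScalars ℝ := by
    ext f
    simp [hI, ev, funext_iff]
  set M : Matrix (Fin k) (Fin k) ℝ := Matrix.of fun s j => (m s).prod fun i e => a i j ^ e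
  have hrows : ev ∘ (fun s => monomial (m s) 1) = M.row := by
    ext s j
    simp [ev, M, aeval_monomial]
  have hM : IsUnit M := M.isUnit_iff_isUnit_det.mpr (det_monomial_eval_ne_zero halg hm).isUnit
  have hspan : Submodule.span ℝ (Set.range M.row) = ⊤ := by
    rw [← range_vecMulLinear]
    exact LinearMap.range_eq_top.mpr (Matrix.vecMul_surjective_iff_isUnit.mpr hM)
  have hli : LinearIndependent ℝ (ev.toLinearMap ∘ fun s => monomial (m s) 1) :=
    hrows ▸ Matrix.linearIndependent_rows_of_isUnit hM
  have hcompl := LinearMap.isCompl_ker_span_range_of_comp hli (hrows ▸ hspan)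
  rw [hker] at hcompl
  refine ⟨.of_comp (Ideal.Quotient.liftₐ I ev fun f hf => ?_).toLinearMap ?_,
    hcompl.inf_eq_bot, hcompl.sup_eq_top⟩
  · rwa [← Submodule.restrictScalars_mem ℝ, ← hker] at hf
  · exact hli

/-- For `k` generic points (coordinates algebraically independent over `ℚ`),
any `k` distinct monomials are linearly independent modulo the vanishing ideal
`I`; equivalently, they span a complement of `I` in `ℝ[x_1,…,x_n]`, so every
order ideal of size `k` is a complementary order ideal of `I`. -/
theorem stmt_14 (n k : ℕ) (hn : 0 < n) (hk : 0 < k)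
    (a : Fin n → Fin k → ℝ)
    (halg : AlgebraicIndependent ℚ (fun p : Fin n × Fin k => a p.1 p.2))
    (I : Ideal (MvPolynomial (Fin n) ℝ))
    (hI : I = ⨅ j : Fin k,
      RingHom.ker ((aeval (fun i : Fin n => a i j)).toRingHom :
        MvPolynomial (Fin n) ℝ →+* ℝ))
    (m : Fin k → (Fin n →₀ ℕ)) (hm : Function.Injective m) :
    (LinearIndependent ℝ
        (fun s : Fin k => Ideal.Quotient.mk I (monomial (m s) (1 : ℝ)))) ∧
      I.restrictScalars ℝ ⊓
          Submodule.span ℝ (Set.range (fun s : Fin k => monomial (m s) (1 : ℝ))) = ⊥ ∧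
      I.restrictScalars ℝ ⊔
          Submodule.span ℝ (Set.range (fun s : Fin k => monomial (m s) (1 : ℝ))) = ⊤ :=
  stmt_14_general n k a halg I hI m hm
end
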